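/- (The exit speed is independent of the shock position.) Let θ₀ ∈ (0, π/2), θ₁ ∈ (π/2, π), and u₀ ∈ (c_*, u_max) satisfy F(u₀)·sin θ₀ < F(c_*)·sin θ₁. Then there is a unique u₁ ∈ (0, c_*) with F(u₁)·sin θ₁ = F(u₀)·sin θ₀; and for every θ_b ∈ [θ₀, θ₁], every background transonic shock solution with shock at θ_b (i.e. continuous u⁻ : [θ₀, θ_b] → (c_*, u_max) and u⁺ : [θ_b, θ₁] → (0, c_*) with u⁻(θ₀) = u₀ and F(u^∓(θ))·sin θ = F(u₀)·sin θ₀ on their domains) has the same exit value u⁺(θ₁) = u₁. -/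

import Mathlib

open Real Set Filter Topology

/-- Maximal speed `u_max = √(2c₀²/(γ−1))`. -/
noncomputable def uMax (γ c₀ : ℝ) : ℝ := Real.sqrt (2 * c₀ ^ 2 / (γ - 1))

/-- Critical (sonic) speed `c_* = √(2c₀²/(γ+1))`. -/
noncomputable def cStar (γ c₀ : ℝ) : ℝ := Real.sqrt (2 * c₀ ^ 2 / (γ + 1))

/-- Local sonic speed `c(u) = √(c₀² − ((γ−1)/2)u²)`. -/
noncomputable def sonic (γ c₀ u : ℝ) : ℝ := Real.sqrt (c₀ ^ 2 - (γ - 1) / 2 * u ^ 2)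

/-- Density `ρ(u) = ((c₀² − ((γ−1)/2)u²)/γ)^{1/(γ−1)}`. -/
noncomputable def dens (γ c₀ u : ℝ) : ℝ :=
  ((c₀ ^ 2 - (γ - 1) / 2 * u ^ 2) / γ) ^ ((1 : ℝ) / (γ - 1))

/-- Mass flux `F(u) = ρ(u)·u`. -/
noncomputable def flux (γ c₀ u : ℝ) : ℝ := dens γ c₀ u * u

/-- Pressure `p(u) = ρ(u)^γ`. -/
noncomputable def pres (γ c₀ u : ℝ) : ℝ := dens γ c₀ u ^ γ

/-! With `c(u)² = c₀² − ((γ−1)/2) u²` and `c(u)² − u² = c₀² − ((γ+1)/2) u²`, the mass flux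
`F = ρ u` has derivative `ρ (c² − u²) / c²`, so it is strictly increasing on the subsonic range
`[0, c_*]`. Hence `F(u₁) sin θ₁ = F(u₀) sin θ₀` has at most one subsonic solution, and one exists
by the intermediate value theorem since `F(0) = 0`. The exit value `u⁺(θ₁)` of any background
solution is such a solution, whatever `θ_b`. -/

section Flux

variable {γ c₀ u : ℝ}

lemma cStar_lt_uMax (hγ : 1 < γ) (hc₀ : c₀ ≠ 0) : cStar γ c₀ < uMax γ c₀ :=
  Real.sqrt_lt_sqrt (by positivity) <|
    div_lt_div_of_pos_left (by positivity) (by linarith) (by linarith)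

lemma cStar_sq (hγ : 1 < γ) : cStar γ c₀ ^ 2 = 2 * c₀ ^ 2 / (γ + 1) :=
  Real.sq_sqrt <| div_nonneg (by positivity) (by linarith)

lemma uMax_sq (hγ : 1 < γ) : uMax γ c₀ ^ 2 = 2 * c₀ ^ 2 / (γ - 1) :=
  Real.sq_sqrt <| div_nonneg (by positivity) (by linarith)

lemma sub_mul_sq_pos_of_abs_lt_uMax (hγ : 1 < γ) (hu : |u| < uMax γ c₀) :
    0 < c₀ ^ 2 - (γ - 1) / 2 * u ^ 2 := by
  have hu2 : u ^ 2 < 2 * c₀ ^ 2 / (γ - 1) := by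
    rw [← uMax_sq hγ]
    exact sq_lt_sq.2 (hu.trans_le (le_abs_self _))
  rw [lt_div_iff₀ (by linarith)] at hu2
  linarith

lemma sub_mul_sq_pos_of_abs_lt_cStar (hγ : 1 < γ) (hu : |u| < cStar γ c₀) :
    0 < c₀ ^ 2 - (γ + 1) / 2 * u ^ 2 := by
  have hu2 : u ^ 2 < 2 * c₀ ^ 2 / (γ + 1) := by
    rw [← cStar_sq hγ]
    exact sq_lt_sq.2 (hu.trans_le (le_abs_self _))
  rw [lt_div_iff₀ (by linarith)] at hu2
  linarith

lemma dens_pos (hγ : 1 < γ) (hu : 0 < c₀ ^ 2 - (γ - 1) / 2 * u ^ 2) : 0 < dens γ c₀ u :=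
  Real.rpow_pos_of_pos (div_pos hu (by linarith)) _

lemma flux_pos (hγ : 1 < γ) (hu₀ : 0 < u) (hu : u < uMax γ c₀) : 0 < flux γ c₀ u :=
  mul_pos (dens_pos hγ (sub_mul_sq_pos_of_abs_lt_uMax hγ (by rwa [abs_of_pos hu₀]))) hu₀

/-- Bernoulli's law in differential form, `ρ' = −ρ u / c²`. -/
lemma hasDerivAt_dens (hγ : 1 < γ) (hu : 0 < c₀ ^ 2 - (γ - 1) / 2 * u ^ 2) :
    HasDerivAt (dens γ c₀)
      (-(dens γ c₀ u * u) / (c₀ ^ 2 - (γ - 1) / 2 * u ^ 2)) u := by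
  have hA : (c₀ ^ 2 - (γ - 1) / 2 * u ^ 2) / γ ≠ 0 := (div_pos hu (by linarith)).ne'
  have hinner : HasDerivAt (fun v => (c₀ ^ 2 - (γ - 1) / 2 * v ^ 2) / γ)
      (-((γ - 1) / 2 * (2 * u)) / γ) u := by
    simpa using (((hasDerivAt_pow 2 u).const_mul ((γ - 1) / 2)).const_sub (c₀ ^ 2)).div_const γ
  refine (hinner.rpow_const (Or.inl hA)).congr_deriv ?_
  rw [Real.rpow_sub_one hA, dens]
  have hγ1 : γ - 1 ≠ 0 := by linarith
  field_simp

lemma hasDerivAt_flux (hγ : 1 < γ) (hu : 0 < c₀ ^ 2 - (γ - 1) / 2 * u ^ 2) :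
    HasDerivAt (flux γ c₀)
      (dens γ c₀ u * (c₀ ^ 2 - (γ + 1) / 2 * u ^ 2) / (c₀ ^ 2 - (γ - 1) / 2 * u ^ 2)) u := by
  refine ((hasDerivAt_dens hγ hu).mul (hasDerivAt_id' u)).congr_deriv ?_
  set B := c₀ ^ 2 - (γ - 1) / 2 * u ^ 2
  have hB : c₀ ^ 2 - (γ + 1) / 2 * u ^ 2 = B - u ^ 2 := by ring
  rw [hB]
  field_simp
  ring

lemma flux_continuousOn (hγ : 1 < γ) (hc₀ : c₀ ≠ 0) :
    ContinuousOn (flux γ c₀) (Icc (-cStar γ c₀) (cStar γ c₀)) := fun _ hx =>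
  (hasDerivAt_flux hγ (sub_mul_sq_pos_of_abs_lt_uMax hγ
    ((abs_le.2 hx).trans_lt (cStar_lt_uMax hγ hc₀)))).continuousAt.continuousWithinAt

lemma flux_strictMonoOn (hγ : 1 < γ) (hc₀ : c₀ ≠ 0) :
    StrictMonoOn (flux γ c₀) (Icc (-cStar γ c₀) (cStar γ c₀)) := by
  refine strictMonoOn_of_deriv_pos (convex_Icc _ _) (flux_continuousOn hγ hc₀) fun x hx => ?_
  rw [interior_Icc] at hx
  have hsub : |x| < cStar γ c₀ := abs_lt.2 hx
  have hc : 0 < c₀ ^ 2 - (γ - 1) / 2 * x ^ 2 :=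
    sub_mul_sq_pos_of_abs_lt_uMax hγ (hsub.trans (cStar_lt_uMax hγ hc₀))
  rw [(hasDerivAt_flux hγ hc).deriv]
  have hsubsonic := sub_mul_sq_pos_of_abs_lt_cStar hγ hsub
  have hρ := dens_pos hγ hc
  positivity

lemma existsUnique_flux_eq (hγ : 1 < γ) (hc₀ : c₀ ≠ 0) {q : ℝ} (hq₀ : 0 < q)
    (hq : q < flux γ c₀ (cStar γ c₀)) :
    ∃! u, u ∈ Ioo 0 (cStar γ c₀) ∧ flux γ c₀ u = q := by
  have hsub : Icc 0 (cStar γ c₀) ⊆ Icc (-cStar γ c₀) (cStar γ c₀) :=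
    Icc_subset_Icc_left (neg_nonpos.2 (Real.sqrt_nonneg _))
  have hq' : q ∈ Ioo (flux γ c₀ 0) (flux γ c₀ (cStar γ c₀)) := by simpa [flux] using ⟨hq₀, hq⟩
  obtain ⟨u, hu, rfl⟩ :=
    intermediate_value_Ioo (Real.sqrt_nonneg _) ((flux_continuousOn hγ hc₀).mono hsub) hq'
  refine ⟨u, ⟨hu, rfl⟩, fun v ⟨hv, hvu⟩ => ?_⟩
  exact (flux_strictMonoOn hγ hc₀).injOn (hsub (Ioo_subset_Icc_self hv))
    (hsub (Ioo_subset_Icc_self hu)) hvu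

end Flux

/-- the exit speed is independent of the shock position: there is a unique
`u₁ ∈ (0, c_*)` with `F(u₁) sin θ₁ = F(u₀) sin θ₀`, and every background transonic shock
solution, whatever its shock position `θ_b`, has exit value `u⁺(θ₁) = u₁`. -/
theorem exit_speed_independent_of_shock_position (γ c₀ θ₀ θ₁ u₀ : ℝ)
    (hγ : 1 < γ) (hc₀ : 0 < c₀)
    (hθ₀ : θ₀ ∈ Set.Ioo 0 (π / 2)) (hθ₁ : θ₁ ∈ Set.Ioo (π / 2) π)
    (hu₀ : u₀ ∈ Set.Ioo (cStar γ c₀) (uMax γ c₀))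
    (hflux : flux γ c₀ u₀ * Real.sin θ₀ < flux γ c₀ (cStar γ c₀) * Real.sin θ₁) :
    (∃! u₁, u₁ ∈ Set.Ioo 0 (cStar γ c₀) ∧
      flux γ c₀ u₁ * Real.sin θ₁ = flux γ c₀ u₀ * Real.sin θ₀) ∧
    ∀ u₁ ∈ Set.Ioo 0 (cStar γ c₀),
      flux γ c₀ u₁ * Real.sin θ₁ = flux γ c₀ u₀ * Real.sin θ₀ →
      ∀ θb ∈ Set.Icc θ₀ θ₁, ∀ um up : ℝ → ℝ,
        ContinuousOn um (Set.Icc θ₀ θb) →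
        (∀ θ ∈ Set.Icc θ₀ θb, um θ ∈ Set.Ioo (cStar γ c₀) (uMax γ c₀)) →
        um θ₀ = u₀ →
        (∀ θ ∈ Set.Icc θ₀ θb,
          flux γ c₀ (um θ) * Real.sin θ = flux γ c₀ u₀ * Real.sin θ₀) →
        ContinuousOn up (Set.Icc θb θ₁) →
        (∀ θ ∈ Set.Icc θb θ₁, up θ ∈ Set.Ioo 0 (cStar γ c₀)) →
        (∀ θ ∈ Set.Icc θb θ₁,
          flux γ c₀ (up θ) * Real.sin θ = flux γ c₀ u₀ * Real.sin θ₀) →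
        up θ₁ = u₁ := by
  have hsin₀ : 0 < sin θ₀ := sin_pos_of_pos_of_lt_pi hθ₀.1 (by linarith [hθ₀.2, pi_pos])
  have hsin₁ : 0 < sin θ₁ := sin_pos_of_pos_of_lt_pi (by linarith [hθ₁.1, pi_pos]) hθ₁.2
  have hF₀ : 0 < flux γ c₀ u₀ :=
    flux_pos hγ ((Real.sqrt_nonneg _).trans_lt hu₀.1) hu₀.2
  have hexit : ∃! u₁, u₁ ∈ Ioo 0 (cStar γ c₀) ∧
      flux γ c₀ u₁ * sin θ₁ = flux γ c₀ u₀ * sin θ₀ := by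
    simpa only [← eq_div_iff hsin₁.ne'] using existsUnique_flux_eq hγ hc₀.ne'
      (div_pos (mul_pos hF₀ hsin₀) hsin₁) ((div_lt_iff₀ hsin₁).2 hflux)
  refine ⟨hexit, fun u₁ hu₁ hu₁F θb hθb _ up _ _ _ _ _ hup hupF => ?_⟩
  have hθ₁b : θ₁ ∈ Icc θb θ₁ := ⟨hθb.2, le_rfl⟩
  exact hexit.unique ⟨hup θ₁ hθ₁b, hupF θ₁ hθ₁b⟩ ⟨hu₁, hu₁F⟩
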